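/- arXiv:1304.0170 — 3 statements merged into one kernel-verified Lean document; each statement's English description precedes it below -/
import Mathlib

section
/- Let x₁, …, xₗ and y₁, …, yₙ be points of ℝ^d in general position (every subset of at most d+1 of them is affinely independent), with n < d+1 and l ≥ 1. Then there exists an index i ≤ l such that xᵢ is not contained in the convex hull of the remaining points {x₁,…,xₗ, y₁,…,yₙ} \ {xᵢ}. -/
/-- If `x₁,…,xₗ, y₁,…,yₙ` are in general position in `ℝ^d` (every subset of size at most
`d+1` is affinely independent) with `n < d + 1` and `l ≥ 1`, then some `xᵢ` lies outside the
convex hull of the remaining points. -/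
theorem exists_not_mem_convexHull_of_generalPosition
    {d l n : ℕ} (hl : 1 ≤ l) (hn : n < d + 1)
    (f : (Fin l ⊕ Fin n) → EuclideanSpace ℝ (Fin d))
    (hgen : ∀ s : Finset (Fin l ⊕ Fin n), s.card ≤ d + 1 →
      AffineIndependent ℝ (fun i : s => f i)) :
    ∃ i : Fin l, f (Sum.inl i) ∉
      convexHull ℝ (Set.range f \ {f (Sum.inl i)}) := by
  set S : Set (EuclideanSpace ℝ (Fin d)) := Set.range f with hS
  have hSfin : S.Finite := Set.finite_range f
  set K := convexHull ℝ S with hK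
  have hKcomp : IsCompact K := hSfin.isCompact_convexHull (𝕜 := ℝ)
  have hKconv : Convex ℝ K := convex_convexHull ℝ S
  have i0 : Fin l := ⟨0, hl⟩
  have hKne : K.Nonempty := ⟨f (Sum.inl i0), subset_convexHull ℝ S ⟨Sum.inl i0, rfl⟩⟩
  -- extreme points
  have hE : K = convexHull ℝ (K.extremePoints ℝ) := by
    have h1 := closure_convexHull_extremePoints hKcomp hKconv
    have hEfin : (K.extremePoints ℝ).Finite :=
      hSfin.subset extremePoints_convexHull_subset
    rw [(hEfin.isClosed_convexHull (𝕜 := ℝ)).closure_eq] at h1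
    exact h1.symm
  -- there is an extreme point of the form f (inl i)
  have hex : ∃ i : Fin l, f (Sum.inl i) ∈ K.extremePoints ℝ := by
    by_contra h
    push_neg at h
    have hEY : K.extremePoints ℝ ⊆ Set.range (f ∘ Sum.inr) := by
      intro e he
      obtain ⟨j, rfl⟩ := extremePoints_convexHull_subset he
      cases j with
      | inl i => exact absurd he (h i)
      | inr j => exact ⟨j, rfl⟩
    -- hence f (inl i0) lies in the affine span of the y's
    set t : Finset (Fin l ⊕ Fin n) :=
      insert (Sum.inl i0) (Finset.univ.image Sum.inr) with ht
    have htc : t.card ≤ d + 1 := by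
      have : t.card ≤ (Finset.univ.image (Sum.inr : Fin n → Fin l ⊕ Fin n)).card + 1 :=
        Finset.card_insert_le _ _
      have h2 : (Finset.univ.image (Sum.inr : Fin n → Fin l ⊕ Fin n)).card ≤ n := by
        simpa using Finset.card_image_le (s := (Finset.univ : Finset (Fin n)))
          (f := (Sum.inr : Fin n → Fin l ⊕ Fin n))
      omega
    have hindep := hgen t htc
    have hmem : (Sum.inl i0 : Fin l ⊕ Fin n) ∈ t := Finset.mem_insert_self _ _
    have hnot := hindep.notMem_affineSpan_diff ⟨Sum.inl i0, hmem⟩ Set.univ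
    apply hnot
    have hsub : Set.range (f ∘ Sum.inr) ⊆
        (fun i : t => f i) '' (Set.univ \ {⟨Sum.inl i0, hmem⟩}) := by
      rintro _ ⟨j, rfl⟩
      have hj : (Sum.inr j : Fin l ⊕ Fin n) ∈ t := by
        exact Finset.mem_insert_of_mem (Finset.mem_image_of_mem _ (Finset.mem_univ j))
      refine ⟨⟨Sum.inr j, hj⟩, ⟨trivial, ?_⟩, rfl⟩
      simp
    have : f (Sum.inl i0) ∈ affineSpan ℝ (Set.range (f ∘ Sum.inr)) := by
      have h3 : f (Sum.inl i0) ∈ K := subset_convexHull ℝ S ⟨Sum.inl i0, rfl⟩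
      rw [hE] at h3
      have h4 : f (Sum.inl i0) ∈ convexHull ℝ (Set.range (f ∘ Sum.inr)) :=
        convexHull_mono hEY h3
      exact convexHull_subset_affineSpan _ h4
    exact affineSpan_mono ℝ hsub this
  obtain ⟨i, hi⟩ := hex
  refine ⟨i, fun hcon => ?_⟩
  rw [hKconv.mem_extremePoints_iff_mem_diff_convexHull_diff] at hi
  apply hi.2
  refine convexHull_mono ?_ hcon
  intro z hz
  exact ⟨subset_convexHull ℝ S hz.1, hz.2⟩
end

section
/- Let x₁, x₂, y₁, y₂, y₃ be five points in the plane in general position (no three collinear, no four cocircular) such that in the Delaunay triangulation of these five points: (a) both x₁ and x₂ lie in the interior of the convex hull of {y₁, y₂, y₃}, and (b) each of x₁, x₂ is Delaunay-adjacent to all four other points. Then a contradiction follows; i.e., conditions (a) and (b) cannot hold simultaneously. -/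
/-- Two points of a finite planar configuration `f : Fin 5 → ℝ²` are Delaunay-adjacent if
some circle passes through both and contains no point of the configuration in its open
disk. -/
def DelaunayAdj (f : Fin 5 → EuclideanSpace ℝ (Fin 2)) (i j : Fin 5) : Prop :=
  ∃ (c : EuclideanSpace ℝ (Fin 2)) (r : ℝ), 0 < r ∧
    dist c (f i) = r ∧ dist c (f j) = r ∧ ∀ m : Fin 5, m ≠ i → m ≠ j → r ≤ dist c (f m)

open AffineMap

namespace NoK5Aux

lemma fin3_mem : ∀ (i j k l : Fin 3), i≠j → i≠k → j≠k → l=i ∨ l=j ∨ l=k := by decide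

lemma fin3_univ : ∀ (i j k : Fin 3), i≠j → i≠k → j≠k →
    ({i,j,k} : Finset (Fin 3)) = Finset.univ := by decide

/-- The inclusion of the three hull vertices. -/
def yidx : Fin 3 → Fin 5 := ![2, 3, 4]

lemma yidx_ne0 : ∀ l, yidx l ≠ 0 := by decide
lemma yidx_ne1 : ∀ l, yidx l ≠ 1 := by decide
lemma yidx_inj : Function.Injective yidx := by decide
lemma card4 : ∀ i j : Fin 3, i ≠ j →
    ({0, 1, yidx i, yidx j} : Finset (Fin 5)).card = 4 := by decide

section helpers

variable {E : Type*} [NormedAddCommGroup E] [NormedSpace ℝ E]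

lemma sum3 (b : AffineBasis (Fin 3) ℝ E) (x : E) (i j k : Fin 3)
    (hij : i ≠ j) (hik : i ≠ k) (hjk : j ≠ k) :
    b.coord i x + b.coord j x + b.coord k x = 1 := by
  have h := b.sum_coord_apply_eq_one x
  rw [← fin3_univ i j k hij hik hjk] at h
  rw [Finset.sum_insert (by simp [hij, hik]), Finset.sum_insert (by simp [hjk]),
    Finset.sum_singleton] at h
  linarith

lemma coord_lineMap (b : AffineBasis (Fin 3) ℝ E) (z w : E) (t : ℝ) (l : Fin 3) :
    b.coord l (lineMap z w t) = (1 - t) * b.coord l z + t * b.coord l w := by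
  rw [AffineMap.apply_lineMap (b.coord l) z w t]
  simp [lineMap_apply_module]

/-- If the barycentric cross-product over coordinates `i, k` vanishes, the three points
`x₁, x₂, b j` are collinear (or `x₁ = x₂`). -/
lemma ratio_collinear (b : AffineBasis (Fin 3) ℝ E) (x₁ x₂ : E) (i j k : Fin 3)
    (hij : i ≠ j) (hik : i ≠ k) (hjk : j ≠ k)
    (hA : ∀ l, 0 < b.coord l x₁)
    (heq : b.coord i x₁ * b.coord k x₂ = b.coord k x₁ * b.coord i x₂) :
    x₁ = x₂ ∨ Collinear ℝ {x₁, x₂, b j} := by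
  obtain ⟨a₁, ha1⟩ : ∃ t, b.coord i x₁ = t := ⟨_, rfl⟩
  obtain ⟨a₂, ha2⟩ : ∃ t, b.coord j x₁ = t := ⟨_, rfl⟩
  obtain ⟨a₃, ha3⟩ : ∃ t, b.coord k x₁ = t := ⟨_, rfl⟩
  obtain ⟨b₁, hb1⟩ : ∃ t, b.coord i x₂ = t := ⟨_, rfl⟩
  obtain ⟨b₂, hb2⟩ : ∃ t, b.coord j x₂ = t := ⟨_, rfl⟩
  obtain ⟨b₃, hb3⟩ : ∃ t, b.coord k x₂ = t := ⟨_, rfl⟩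
  rw [ha1, hb1, ha3, hb3] at heq
  have ha1p := hA i
  rw [ha1] at ha1p
  have hsa : a₁ + a₂ + a₃ = 1 := by rw [← ha1, ← ha2, ← ha3]; exact sum3 b x₁ i j k hij hik hjk
  have hsb : b₁ + b₂ + b₃ = 1 := by rw [← hb1, ← hb2, ← hb3]; exact sum3 b x₂ i j k hij hik hjk
  by_cases hib : a₁ = b₁
  · left
    have h3 : a₃ = b₃ := by
      rcases mul_eq_zero.1 (show a₁ * (b₃ - a₃) = 0 by rw [hib] at heq ⊢; nlinarith) with h | h
      · exact absurd h (by linarith)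
      · linarith
    have h2 : a₂ = b₂ := by linarith
    apply b.ext_elem
    intro l
    rcases fin3_mem i j k l hij hik hjk with rfl | rfl | rfl
    · rw [ha1, hb1, hib]
    · rw [ha2, hb2, h2]
    · rw [ha3, hb3, h3]
  · right
    have hibne : a₁ - b₁ ≠ 0 := sub_ne_zero.2 hib
    have hbj : b j = lineMap x₁ x₂ (a₁ / (a₁ - b₁)) := by
      apply b.ext_elem
      intro l
      rw [coord_lineMap]
      rcases fin3_mem i j k l hij hik hjk with rfl | rfl | rfl
      · rw [b.coord_apply_ne hij, ha1, hb1]; field_simp; ring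
      · rw [b.coord_apply_eq, ha2, hb2]
        field_simp
        linear_combination heq + b₁*hsa - a₁*hsb
      · rw [b.coord_apply_ne (Ne.symm hjk), ha3, hb3]
        field_simp
        linear_combination (-1) * heq
    have hcol : Collinear ℝ {b j, x₁, x₂} :=
      collinear_insert_of_mem_affineSpan_pair (hbj ▸ AffineMap.lineMap_mem_affineSpan_pair _ _ _)
    have hset : ({b j, x₁, x₂} : Set E) = {x₁, x₂, b j} := by
      ext z; simp only [Set.mem_insert_iff, Set.mem_singleton_iff]; tauto
    rwa [hset] at hcol

/-- If the ratios of barycentric coordinates are suitably ordered, the segments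
`[x₁, b i]` and `[x₂, b j]` cross at an interior point of both. -/
lemma crossing (b : AffineBasis (Fin 3) ℝ E) (x₁ x₂ : E) (i j k : Fin 3)
    (hij : i ≠ j) (hik : i ≠ k) (hjk : j ≠ k)
    (hA : ∀ l, 0 < b.coord l x₁) (hB : ∀ l, 0 < b.coord l x₂)
    (h1 : b.coord i x₁ * b.coord k x₂ < b.coord k x₁ * b.coord i x₂)
    (h2 : b.coord k x₁ * b.coord j x₂ < b.coord j x₁ * b.coord k x₂) :
    ∃ p, p ∈ openSegment ℝ x₁ (b i) ∧ p ∈ openSegment ℝ x₂ (b j) := by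
  obtain ⟨a₁, ha1⟩ : ∃ t, b.coord i x₁ = t := ⟨_, rfl⟩
  obtain ⟨a₂, ha2⟩ : ∃ t, b.coord j x₁ = t := ⟨_, rfl⟩
  obtain ⟨a₃, ha3⟩ : ∃ t, b.coord k x₁ = t := ⟨_, rfl⟩
  obtain ⟨b₁, hb1⟩ : ∃ t, b.coord i x₂ = t := ⟨_, rfl⟩
  obtain ⟨b₂, hb2⟩ : ∃ t, b.coord j x₂ = t := ⟨_, rfl⟩
  obtain ⟨b₃, hb3⟩ : ∃ t, b.coord k x₂ = t := ⟨_, rfl⟩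
  rw [ha1, hb1, ha3, hb3] at h1
  rw [ha3, hb3, ha2, hb2] at h2
  have ha1p := hA i; have ha2p := hA j; have ha3p := hA k
  have hb1p := hB i; have hb2p := hB j; have hb3p := hB k
  rw [ha1] at ha1p; rw [ha2] at ha2p; rw [ha3] at ha3p
  rw [hb1] at hb1p; rw [hb2] at hb2p; rw [hb3] at hb3p
  have hsa : a₁ + a₂ + a₃ = 1 := by rw [← ha1, ← ha2, ← ha3]; exact sum3 b x₁ i j k hij hik hjk
  have hsb : b₁ + b₂ + b₃ = 1 := by rw [← hb1, ← hb2, ← hb3]; exact sum3 b x₂ i j k hij hik hjk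
  have hDpos : (0:ℝ) < b₃ * a₂ + b₃ * a₃ + a₃ * b₁ := by positivity
  obtain ⟨u, hu⟩ : ∃ t : ℝ, t = b₃ / (b₃ * a₂ + b₃ * a₃ + a₃ * b₁) := ⟨_, rfl⟩
  obtain ⟨v, hv⟩ : ∃ t : ℝ, t = a₃ / (b₃ * a₂ + b₃ * a₃ + a₃ * b₁) := ⟨_, rfl⟩
  have hu0 : 0 < u := by rw [hu]; positivity
  have hv0 : 0 < v := by rw [hv]; positivity
  have hu1 : u < 1 := by rw [hu, div_lt_one hDpos]; nlinarith
  have hv1 : v < 1 := by rw [hv, div_lt_one hDpos]; nlinarith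
  have hpq : lineMap x₁ (b i) (1 - u) = lineMap x₂ (b j) (1 - v) := by
    apply b.ext_elem
    intro l
    rw [coord_lineMap, coord_lineMap]
    rcases fin3_mem i j k l hij hik hjk with rfl | rfl | rfl
    · rw [b.coord_apply_eq, b.coord_apply_ne hij, ha1, hb1, hu, hv]
      field_simp
      linear_combination b₃ * hsa
    · rw [b.coord_apply_ne (Ne.symm hij), b.coord_apply_eq, ha2, hb2, hu, hv]
      field_simp
      linear_combination (-a₃) * hsb
    · rw [b.coord_apply_ne (Ne.symm hik), b.coord_apply_ne (Ne.symm hjk), ha3, hb3, hu, hv]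
      field_simp
      ring
  refine ⟨lineMap x₁ (b i) (1 - u), ?_, ?_⟩
  · rw [openSegment_eq_image_lineMap]
    exact ⟨1 - u, ⟨by linarith, by linarith⟩, rfl⟩
  · rw [hpq, openSegment_eq_image_lineMap]
    exact ⟨1 - v, ⟨by linarith, by linarith⟩, rfl⟩

/-- A finset-style affine-independence hypothesis yields independence of any triple. -/
lemma triple_ai (f : Fin 5 → E)
    (hcol : ∀ s : Finset (Fin 5), s.card ≤ 3 → AffineIndependent ℝ (fun i : s => f i))
    (p q r : Fin 5) (hpq : p ≠ q) (hpr : p ≠ r) (hqr : q ≠ r) :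
    AffineIndependent ℝ ![f p, f q, f r] := by
  have hc : ({p, q, r} : Finset (Fin 5)).card ≤ 3 := by
    have h1 := Finset.card_insert_le p ({q, r} : Finset (Fin 5))
    have h2 := Finset.card_insert_le q ({r} : Finset (Fin 5))
    simp only [Finset.card_singleton] at h1 h2
    omega
  have h := hcol {p, q, r} hc
  have hmem : ∀ x : Fin 3, (![p, q, r] x) ∈ ({p, q, r} : Finset (Fin 5)) := by
    intro x; fin_cases x <;> simp
  let g : Fin 3 → ({p, q, r} : Finset (Fin 5)) := fun x => ⟨![p, q, r] x, hmem x⟩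
  have hginj : Function.Injective g := by
    intro x y hxy
    have : (![p, q, r] x) = (![p, q, r] y) := congrArg Subtype.val hxy
    fin_cases x <;> fin_cases y <;> simp_all
  have := h.comp_embedding ⟨g, hginj⟩
  convert this using 1
  funext l
  fin_cases l <;> rfl

end helpers

/-- Squeeze argument for the power function along two crossing chords. -/
lemma squeeze (R Q X0 Xi C1 Cj s t : ℝ) (hs0 : 0 < s) (hs1 : s < 1)
    (ht0 : 0 < t) (ht1 : t < 1)
    (hC1 : R ≤ C1) (hCj : R ≤ Cj) (hX0 : Q ≤ X0) (hXi : Q ≤ Xi)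
    (hcomb : (1-s)*(R - X0) + s*(R - Xi) = (1-t)*(C1 - Q) + t*(Cj - Q)) :
    X0 = Q ∧ Xi = Q := by
  have p1 : 0 ≤ (1-t) * (C1 - R) := mul_nonneg (by linarith) (by linarith)
  have p2 : 0 ≤ t * (Cj - R) := mul_nonneg ht0.le (by linarith)
  have p3 : 0 ≤ s * (Xi - Q) := mul_nonneg hs0.le (by linarith)
  have p4 : 0 ≤ (1-s) * (X0 - Q) := mul_nonneg (by linarith) (by linarith)
  constructor
  · nlinarith [p1, p2, p3, p4]
  · nlinarith [p1, p2, p3, p4]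

/-- The "power difference" of two circles is affine along segments. -/
lemma phi_lineMap {E : Type*} [NormedAddCommGroup E] [InnerProductSpace ℝ E]
    (x y c₁ c₂ : E) (s : ℝ) :
    dist (lineMap x y s) c₁ ^ 2 - dist (lineMap x y s) c₂ ^ 2
      = (1 - s) * (dist x c₁ ^ 2 - dist x c₂ ^ 2) + s * (dist y c₁ ^ 2 - dist y c₂ ^ 2) := by
  simp only [lineMap_apply_module, dist_eq_norm, ← real_inner_self_eq_norm_sq]
  simp only [inner_sub_sub_self, inner_smul_left, inner_smul_right, inner_add_add_self,
    inner_add_left, inner_add_right, inner_sub_left, inner_sub_right, real_inner_comm x y]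
  ring_nf
  simp [real_inner_comm, inner_smul_left, inner_smul_right, inner_sub_left, inner_sub_right,
    inner_add_left, inner_add_right]
  ring_nf

end NoK5Aux

open NoK5Aux

/-- Five points `x₁ = f 0`, `x₂ = f 1`, `y₁ = f 2`, `y₂ = f 3`, `y₃ = f 4` in general
position in the plane cannot satisfy simultaneously: (a) `x₁, x₂` lie in the interior of
the convex hull of `{y₁, y₂, y₃}`, and (b) each of `x₁, x₂` is Delaunay-adjacent to all
four other points. -/
theorem no_K5_delaunay_configuration
    (f : Fin 5 → EuclideanSpace ℝ (Fin 2)) (hinj : Function.Injective f)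
    (hcol : ∀ s : Finset (Fin 5), s.card ≤ 3 → AffineIndependent ℝ (fun i : s => f i))
    (hcirc : ∀ s : Finset (Fin 5), s.card = 4 →
      ¬ ∃ (c : EuclideanSpace ℝ (Fin 2)) (r : ℝ), ∀ i ∈ s, dist c (f i) = r)
    (ha : f 0 ∈ interior (convexHull ℝ ({f 2, f 3, f 4} : Set (EuclideanSpace ℝ (Fin 2)))) ∧
          f 1 ∈ interior (convexHull ℝ ({f 2, f 3, f 4} : Set (EuclideanSpace ℝ (Fin 2)))))
    (hb : ∀ i : Fin 5, i = 0 ∨ i = 1 → ∀ j : Fin 5, j ≠ i → DelaunayAdj f i j) :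
    False := by
  classical
  let y : Fin 3 → EuclideanSpace ℝ (Fin 2) := ![f 2, f 3, f 4]
  have hyf : ∀ l, y l = f (yidx l) := by intro l; fin_cases l <;> rfl
  have hy : AffineIndependent ℝ y :=
    triple_ai f hcol 2 3 4 (by decide) (by decide) (by decide)
  have htop : affineSpan ℝ (Set.range y) = ⊤ := by
    rw [hy.affineSpan_eq_top_iff_card_eq_finrank_add_one]
    simp [finrank_euclideanSpace_fin]
  let b : AffineBasis (Fin 3) ℝ (EuclideanSpace ℝ (Fin 2)) := ⟨y, hy, htop⟩
  have hbl : ∀ l, b l = f (yidx l) := fun l => hyf l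
  have hrange : Set.range ⇑b = ({f 2, f 3, f 4} : Set (EuclideanSpace ℝ (Fin 2))) := by
    ext z
    simp only [Set.mem_range, Set.mem_insert_iff, Set.mem_singleton_iff]
    constructor
    · rintro ⟨l, rfl⟩; fin_cases l
      exacts [Or.inl rfl, Or.inr (Or.inl rfl), Or.inr (Or.inr rfl)]
    · rintro (rfl | rfl | rfl)
      exacts [⟨0, rfl⟩, ⟨1, rfl⟩, ⟨2, rfl⟩]
  have hA : ∀ l, 0 < b.coord l (f 0) := by
    have h := ha.1; rw [← hrange, b.interior_convexHull] at h; exact h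
  have hB : ∀ l, 0 < b.coord l (f 1) := by
    have h := ha.2; rw [← hrange, b.interior_convexHull] at h; exact h
  have hfne : f 0 ≠ f 1 := fun h => by have := hinj h; simp at this
  -- no two barycentric ratios coincide
  have hRne : ∀ i j k : Fin 3, i ≠ j → i ≠ k → j ≠ k →
      b.coord i (f 0) * b.coord k (f 1) ≠ b.coord k (f 0) * b.coord i (f 1) := by
    intro i j k hij hik hjk heq
    rcases ratio_collinear b (f 0) (f 1) i j k hij hik hjk hA heq with h | h
    · exact hfne h
    · rw [hbl] at h
      have hai := triple_ai f hcol 0 1 (yidx j) (by decide)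
        (Ne.symm (yidx_ne0 j)) (Ne.symm (yidx_ne1 j))
      exact (affineIndependent_iff_not_collinear_set.mp hai) h
  -- the core geometric argument: a crossing of two Delaunay edges is impossible
  have go : ∀ i j k : Fin 3, i ≠ j → i ≠ k → j ≠ k →
      b.coord i (f 0) * b.coord k (f 1) < b.coord k (f 0) * b.coord i (f 1) →
      b.coord k (f 0) * b.coord j (f 1) < b.coord j (f 0) * b.coord k (f 1) → False := by
    intro i j k hij hik hjk h1 h2
    obtain ⟨p, hp1, hp2⟩ := crossing b (f 0) (f 1) i j k hij hik hjk hA hB h1 h2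
    rw [hbl, openSegment_eq_image_lineMap] at hp1 hp2
    obtain ⟨s, hs, rfl⟩ := hp1
    obtain ⟨t, ht, hpt⟩ := hp2
    obtain ⟨c₁, r₁, hr₁, hc10, hc1i, hm₁⟩ := hb 0 (Or.inl rfl) (yidx i) (yidx_ne0 i)
    obtain ⟨c₂, r₂, hr₂, hc21, hc2j, hm₂⟩ := hb 1 (Or.inr rfl) (yidx j) (yidx_ne1 j)
    -- on-circle facts, with distances written pointing from the points
    have q0 : dist (f 0) c₁ ^ 2 = r₁ ^ 2 := by rw [dist_comm, hc10]
    have qi : dist (f (yidx i)) c₁ ^ 2 = r₁ ^ 2 := by rw [dist_comm, hc1i]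
    have q1 : dist (f 1) c₂ ^ 2 = r₂ ^ 2 := by rw [dist_comm, hc21]
    have qj : dist (f (yidx j)) c₂ ^ 2 = r₂ ^ 2 := by rw [dist_comm, hc2j]
    -- emptiness facts
    have e0 : r₂ ≤ dist (f 0) c₂ := by
      rw [dist_comm]; exact hm₂ 0 (by decide) (Ne.symm (yidx_ne0 j))
    have ei : r₂ ≤ dist (f (yidx i)) c₂ := by
      rw [dist_comm]
      exact hm₂ (yidx i) (yidx_ne1 i) (fun h => hij (yidx_inj h))
    have e1 : r₁ ≤ dist (f 1) c₁ := by
      rw [dist_comm]; exact hm₁ 1 (by decide) (Ne.symm (yidx_ne1 i))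
    have ej : r₁ ≤ dist (f (yidx j)) c₁ := by
      rw [dist_comm]
      exact hm₁ (yidx j) (yidx_ne0 j) (fun h => hij (yidx_inj h).symm)
    have s0 : r₂ ^ 2 ≤ dist (f 0) c₂ ^ 2 := pow_le_pow_left₀ hr₂.le e0 2
    have si : r₂ ^ 2 ≤ dist (f (yidx i)) c₂ ^ 2 := pow_le_pow_left₀ hr₂.le ei 2
    have s1 : r₁ ^ 2 ≤ dist (f 1) c₁ ^ 2 := pow_le_pow_left₀ hr₁.le e1 2
    have sj : r₁ ^ 2 ≤ dist (f (yidx j)) c₁ ^ 2 := pow_le_pow_left₀ hr₁.le ej 2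
    -- the affine power function
    have k1 := phi_lineMap (f 0) (f (yidx i)) c₁ c₂ s
    have k2 := phi_lineMap (f 1) (f (yidx j)) c₁ c₂ t
    rw [hpt] at k2
    have hcomb : (1 - s) * (dist (f 0) c₁ ^ 2 - dist (f 0) c₂ ^ 2)
        + s * (dist (f (yidx i)) c₁ ^ 2 - dist (f (yidx i)) c₂ ^ 2)
        = (1 - t) * (dist (f 1) c₁ ^ 2 - dist (f 1) c₂ ^ 2)
        + t * (dist (f (yidx j)) c₁ ^ 2 - dist (f (yidx j)) c₂ ^ 2) := by
      rw [← k1, ← k2]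
    rw [q0, qi, q1, qj] at hcomb
    obtain ⟨hs0, hs1⟩ := hs
    obtain ⟨ht0, ht1⟩ := ht
    obtain ⟨hX0, hXi⟩ := squeeze (r₁ ^ 2) (r₂ ^ 2) (dist (f 0) c₂ ^ 2)
      (dist (f (yidx i)) c₂ ^ 2) (dist (f 1) c₁ ^ 2) (dist (f (yidx j)) c₁ ^ 2)
      s t hs0 hs1 ht0 ht1 s1 sj s0 si hcomb
    have hX' : dist c₂ (f 0) = r₂ := by
      rw [dist_comm]
      have h2 : (dist (f 0) c₂ - r₂) * (dist (f 0) c₂ + r₂) = 0 := by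
        linear_combination hX0
      rcases mul_eq_zero.1 h2 with h | h
      · linarith
      · linarith [dist_nonneg (x := f 0) (y := c₂)]
    have hY' : dist c₂ (f (yidx i)) = r₂ := by
      rw [dist_comm]
      have h2 : (dist (f (yidx i)) c₂ - r₂) * (dist (f (yidx i)) c₂ + r₂) = 0 := by
        linear_combination hXi
      rcases mul_eq_zero.1 h2 with h | h
      · linarith
      · linarith [dist_nonneg (x := f (yidx i)) (y := c₂)]
    refine hcirc {0, 1, yidx i, yidx j} (card4 i j hij) ⟨c₂, r₂, ?_⟩
    intro m hm
    simp only [Finset.mem_insert, Finset.mem_singleton] at hm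
    rcases hm with rfl | rfl | rfl | rfl
    exacts [hX', hc21, hY', hc2j]
  -- trichotomies for the three barycentric ratios
  have t01 := lt_or_gt_of_ne (hRne 0 2 1 (by decide) (by decide) (by decide))
  have t02 := lt_or_gt_of_ne (hRne 0 1 2 (by decide) (by decide) (by decide))
  have t12 := lt_or_gt_of_ne (hRne 1 0 2 (by decide) (by decide) (by decide))
  rcases t01 with h01 | h10 <;> rcases t02 with h02 | h20 <;> rcases t12 with h12 | h21
  · exact go 0 2 1 (by decide) (by decide) (by decide) h01 h12
  · exact go 0 1 2 (by decide) (by decide) (by decide) h02 h21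
  · exact go 2 1 0 (by decide) (by decide) (by decide) h20 h01
  · exact go 2 1 0 (by decide) (by decide) (by decide) h20 h01
  · exact go 1 2 0 (by decide) (by decide) (by decide) h10 h02
  · exact go 1 2 0 (by decide) (by decide) (by decide) h10 h02
  · exact go 1 0 2 (by decide) (by decide) (by decide) h12 h20
  · exact go 2 0 1 (by decide) (by decide) (by decide) h21 h10
end

section
/- Let d ≥ 1, M > 0, γ > 0, and 0 < u ≤ min{ M√d/4, (√d/2)·γ^{−1/d} }. Then e^{N(log(1+γc^d) − γc^d)} ≤ e^{−(1/4)d^{−d/2}M^d γ² u^d}, where c = 2u/√d and N = ⌊M/c⌋^d. (This is the key numeric estimate in the proof that P(r'_{min|C}(γ) ≥ u) ≤ e^{−c(M)γ²u^d} for the minimal half-interpoint distance of a Poisson process in a cube of side M.) -/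
lemma log_one_add_sub_le (x : ℝ) (hx0 : 0 ≤ x) (hx1 : x ≤ 1) :
    Real.log (1 + x) - x ≤ -(x ^ 2 / 4) := by
  have ht : 0 ≤ x - x ^ 2 / 4 := by nlinarith
  have hexp := Real.quadratic_le_exp_of_nonneg ht
  have h1x : (1 : ℝ) + x ≤ Real.exp (x - x ^ 2 / 4) := by nlinarith
  have hlog := Real.log_le_log (by positivity) h1x
  rw [Real.log_exp] at hlog
  linarith

/-- Key numeric estimate: with `c = 2u/√d` and `N = ⌊M/c⌋^d`, one has
`exp(N (log(1+γc^d) − γc^d)) ≤ exp(−(1/4) d^{−d/2} M^d γ² u^d)`. -/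
theorem key_numeric_estimate
    (d : ℕ) (hd : 1 ≤ d) (M γ u : ℝ) (hM : 0 < M) (hγ : 0 < γ) (hu : 0 < u)
    (hu' : u ≤ min (M * Real.sqrt d / 4) (Real.sqrt d / 2 * γ ^ (-(1 : ℝ) / d))) :
    Real.exp ((⌊M / (2 * u / Real.sqrt d)⌋ : ℝ) ^ d *
        (Real.log (1 + γ * (2 * u / Real.sqrt d) ^ d) - γ * (2 * u / Real.sqrt d) ^ d))
      ≤ Real.exp (-(1 / 4) * ((d : ℝ) ^ ((d : ℝ) / 2))⁻¹ * M ^ d * γ ^ 2 * u ^ d) := by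
  have hd0 : (0 : ℝ) < d := by exact_mod_cast hd
  have hs : 0 < Real.sqrt d := Real.sqrt_pos.2 hd0
  set s : ℝ := Real.sqrt d with hsdef
  set c : ℝ := 2 * u / s with hcdef
  have hc : 0 < c := by positivity
  have hu1 := (le_min_iff.1 hu').1
  have hu2 := (le_min_iff.1 hu').2
  -- c ≤ M/2
  have hcM : c ≤ M / 2 := by
    rw [hcdef, div_le_div_iff₀ hs two_pos]
    linarith
  -- x = γ c^d ≤ 1
  have hcle : c ≤ γ ^ (-(1 : ℝ) / d) := by
    rw [hcdef, div_le_iff₀ hs]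
    calc 2 * u ≤ 2 * (s / 2 * γ ^ (-(1 : ℝ) / d)) := by linarith
      _ = γ ^ (-(1 : ℝ) / d) * s := by ring
  have hx1 : γ * c ^ d ≤ 1 := by
    have hcpow : c ^ d ≤ (γ ^ (-(1 : ℝ) / d)) ^ d :=
      pow_le_pow_left₀ hc.le hcle d
    have : (γ ^ (-(1 : ℝ) / d)) ^ d = γ⁻¹ := by
      rw [← Real.rpow_natCast (γ ^ (-(1 : ℝ) / d)) d, ← Real.rpow_mul hγ.le]
      rw [div_mul_cancel₀, Real.rpow_neg_one]
      exact ne_of_gt hd0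
    calc γ * c ^ d ≤ γ * γ⁻¹ := by
          rw [← this]; exact mul_le_mul_of_nonneg_left hcpow hγ.le
      _ = 1 := mul_inv_cancel₀ hγ.ne'
  set x : ℝ := γ * c ^ d with hxdef
  have hx0 : 0 ≤ x := by positivity
  have hlog := log_one_add_sub_le x hx0 hx1
  -- floor bound
  have hMc2 : (2 : ℝ) ≤ M / c := by
    rw [le_div_iff₀ hc]; linarith
  have hfloor : M / (2 * c) ≤ (⌊M / c⌋ : ℝ) := by
    have h1 := Int.sub_one_lt_floor (M / c)
    have h2 : M / (2 * c) = (M / c) / 2 := by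
      rw [div_div, mul_comm]
    linarith
  have hfloorpos : (0 : ℝ) < M / (2 * c) := by positivity
  have hNge : (M / (2 * c)) ^ d ≤ (⌊M / c⌋ : ℝ) ^ d :=
    pow_le_pow_left₀ hfloorpos.le hfloor d
  -- combine
  rw [Real.exp_le_exp]
  have key : (⌊M / c⌋ : ℝ) ^ d * (Real.log (1 + x) - x) ≤
      (M / (2 * c)) ^ d * (-(x ^ 2 / 4)) := by
    calc (⌊M / c⌋ : ℝ) ^ d * (Real.log (1 + x) - x)
        ≤ (⌊M / c⌋ : ℝ) ^ d * (-(x ^ 2 / 4)) := by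
          apply mul_le_mul_of_nonneg_left hlog (by positivity)
      _ ≤ (M / (2 * c)) ^ d * (-(x ^ 2 / 4)) := by
          exact mul_le_mul_of_nonpos_right hNge (neg_nonpos.2 (by positivity))
  refine key.trans (le_of_eq ?_)
  -- now compute equality
  have hsd : s ^ d = (d : ℝ) ^ ((d : ℝ) / 2) := by
    rw [hsdef, Real.sqrt_eq_rpow, ← Real.rpow_natCast ((d:ℝ) ^ ((1:ℝ)/2)) d,
      ← Real.rpow_mul hd0.le]
    ring_nf
  have hcd : c ^ d = 2 ^ d * u ^ d / s ^ d := by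
    rw [hcdef, div_pow, mul_pow]
  have hsdpos : 0 < s ^ d := by positivity
  rw [← hsd, hxdef, hcdef]
  field_simp
  have h4 : (4 : ℝ) ^ d = 2 ^ (d * 2) := by
    rw [mul_comm, pow_mul]; norm_num
  ring_nf
  have e1 : s ^ (d * 2) * s⁻¹ ^ (d * 2) = 1 := by
    rw [← mul_pow, mul_inv_cancel₀ hs.ne', one_pow]
  have e2 : u ^ (d * 2) * u⁻¹ ^ d = u ^ d := by
    rw [inv_pow, pow_mul, sq, mul_assoc, mul_inv_cancel₀ (pow_ne_zero _ hu.ne'), mul_one]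
  have e3 : (1 / 4 : ℝ) ^ d * 2 ^ (d * 2) = 1 := by
    rw [← h4, ← mul_pow]; norm_num
  linear_combination (-M ^ d * (u ^ (d * 2) * u⁻¹ ^ d) * ((1 / 4 : ℝ) ^ d * 2 ^ (d * 2))) * e1
    + (-M ^ d * ((1 / 4 : ℝ) ^ d * 2 ^ (d * 2))) * e2 + (-M ^ d * u ^ d) * e3
end
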